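/- Let R be a von Neumann regular ring with identity, let a, b, c ∈ R be fixed, and let e, f ∈ R be idempotents with eR = aR ∩ cR and Rf = Ra ∩ Rb. Let C = {s ∈ eRf : s ≤⊕ a}, assume a ∉ eRf, and let g be any von Neumann inverse of a (a*g*a = a). Then the set of maximal elements of C (with respect to ≤⊕) equals {e*v*f : v ∈ R, (f*g*e)*v*(f*g*e) = f*g*e and v*(f*g*e)*v = v}, i.e. the maximal elements of C are exactly the elements e*v*f where v is a strong von Neumann inverse of f*g*e. -/
import Mathlib


open Pointwise

/-- The right ideal `aR = {a*r : r ∈ R}`. -/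
def rId {R : Type*} [Ring R] (a : R) : Set R := Set.range (fun r => a * r)

/-- The left ideal `Ra = {r*a : r ∈ R}`. -/
def lId {R : Type*} [Ring R] (a : R) : Set R := Set.range (fun r => r * a)

/-- The direct sum partial order: `a ≤⊕ b` iff `bR = aR ⊕ (b-a)R`. -/
def dsLE {R : Type*} [Ring R] (a b : R) : Prop :=
  rId a + rId (b - a) = rId b ∧ rId a ∩ rId (b - a) = {0}

/-- The set `eRf = {e*r*f : r ∈ R}`. -/
def midSet {R : Type*} [Ring R] (e f : R) : Set R := {x : R | ∃ r : R, x = e * r * f}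

section helpers

variable {R : Type*} [Ring R]

lemma mem_rId {a x : R} : x ∈ rId a ↔ ∃ r, a * r = x := Iff.rfl

lemma dsLE_of_proj {a d : R} (p h : R)
    (hp : a * p = d) (h1 : h * d = d) (h2 : h * a = d) : dsLE d a := by
  constructor
  · apply Set.Subset.antisymm
    · rintro x hx
      rw [Set.mem_add] at hx
      obtain ⟨y, hy, z, hz, rfl⟩ := hx
      obtain ⟨r, rfl⟩ := mem_rId.mp hy
      obtain ⟨r', rfl⟩ := mem_rId.mp hz
      exact mem_rId.mpr ⟨p * r + r' - p * r', by rw [← hp]; noncomm_ring⟩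
    · rintro x hx
      obtain ⟨r, rfl⟩ := mem_rId.mp hx
      rw [Set.mem_add]
      exact ⟨d * r, mem_rId.mpr ⟨r, rfl⟩, (a - d) * r, mem_rId.mpr ⟨r, rfl⟩, by noncomm_ring⟩
  · apply Set.Subset.antisymm
    · rintro x ⟨hx1, hx2⟩
      obtain ⟨r, hr⟩ := mem_rId.mp hx1
      obtain ⟨r', hr'⟩ := mem_rId.mp hx2
      have e1 : h * x = x := by rw [← hr, ← mul_assoc, h1]
      have e2 : h * x = 0 := by
        rw [← hr']
        calc h * ((a - d) * r') = (h * a) * r' - (h * d) * r' := by noncomm_ring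
          _ = 0 := by rw [h1, h2]; noncomm_ring
      simp only [Set.mem_singleton_iff]
      rw [← e1, e2]
    · rintro x hx
      simp only [Set.mem_singleton_iff] at hx
      subst hx
      exact ⟨mem_rId.mpr ⟨0, by simp⟩, mem_rId.mpr ⟨0, by simp⟩⟩

lemma dsLE_zero_of_mem {a d x : R} (h : dsLE d a)
    (h1 : x ∈ rId d) (h2 : x ∈ rId (a - d)) : x = 0 := by
  have hx : x ∈ rId d ∩ rId (a - d) := ⟨h1, h2⟩
  rw [h.2] at hx
  exact hx

end helpers

theorem stmt12 {R : Type*} [Ring R]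
    (hreg : ∀ r : R, ∃ x : R, r * x * r = r)
    (a b c e f : R) (he : e * e = e) (hf : f * f = f)
    (heR : rId e = rId a ∩ rId c) (hRf : lId f = lId a ∩ lId b)
    (C : Set R) (hC : C = {s ∈ midSet e f | dsLE s a})
    (hanotin : a ∉ midSet e f)
    (g : R) (hg : a * g * a = a) :
    {d ∈ C | ∀ c' ∈ C, dsLE d c' → c' = d} =
      {w : R | ∃ v : R,
        (f * g * e) * v * (f * g * e) = f * g * e ∧
        v * (f * g * e) * v = v ∧ w = e * v * f} := by
  obtain ⟨p, hp⟩ : ∃ p, a * p = e := by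
    have h1 : e ∈ rId e := mem_rId.mpr ⟨e, he⟩
    rw [heR] at h1
    exact mem_rId.mp h1.1
  obtain ⟨q, hq⟩ : ∃ q, q * a = f := by
    have h1 : f ∈ lId f := ⟨f, hf⟩
    rw [hRf] at h1
    exact h1.1
  have hage : a * g * e = e := by rw [← hp, ← mul_assoc, hg]
  have hfga : f * g * a = f := by
    rw [← hq, mul_assoc q a g, mul_assoc q (a * g) a, hg]
  set t := f * g * e with ht
  have hft : f * t = t := by rw [ht, ← mul_assoc, ← mul_assoc, hf]
  have hte : t * e = t := by rw [ht, mul_assoc, he]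
  have habs1 : ∀ s r : R, s = e * r * f → a * g * s = s := by
    intro s r hs
    rw [hs]
    calc a * g * (e * r * f) = (a * g * e) * (r * f) := by noncomm_ring
      _ = e * (r * f) := by rw [hage]
      _ = e * r * f := by rw [← mul_assoc]
  have habs2 : ∀ s r : R, s = e * r * f → s * g * a = s := by
    intro s r hs
    rw [hs]
    calc e * r * f * g * a = e * r * (f * g * a) := by noncomm_ring
      _ = e * r * f := by rw [hfga]
  have bridge : ∀ r : R, (e * r * f) * t * (e * r * f) = (e * r * f) * g * (e * r * f) := by
    intro r
    calc (e * r * f) * t * (e * r * f) = e * r * ((f * t) * e) * r * f := by noncomm_ring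
      _ = e * r * (t * e) * r * f := by rw [hft]
      _ = e * r * t * r * f := by rw [hte]
      _ = e * r * (f * g * e) * r * f := by rw [ht]
      _ = (e * r * f) * g * (e * r * f) := by noncomm_ring
  have memC : ∀ s : R, s ∈ C ↔ (∃ r, s = e * r * f) ∧ dsLE s a := by
    intro s
    rw [hC, Set.mem_sep_iff]
    exact Iff.rfl
  have charC : ∀ s : R, s ∈ C ↔ (∃ r, s = e * r * f) ∧ s * t * s = s := by
    intro s
    rw [memC s]
    constructor
    · rintro ⟨⟨r, hs⟩, hle⟩
      refine ⟨⟨r, hs⟩, ?_⟩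
      have h1 := habs1 s r hs
      have h2 := habs2 s r hs
      have hz1 : s * g * s - s ∈ rId s := mem_rId.mpr ⟨g * s - g * a, by
        calc s * (g * s - g * a) = s * g * s - s * g * a := by noncomm_ring
          _ = s * g * s - s := by rw [h2]⟩
      have hz2 : s * g * s - s ∈ rId (a - s) := mem_rId.mpr ⟨-(g * s), by
        calc (a - s) * (-(g * s)) = s * g * s - a * g * s := by noncomm_ring
          _ = s * g * s - s := by rw [h1]⟩
      have hsgs : s * g * s = s := sub_eq_zero.mp (dsLE_zero_of_mem hle hz1 hz2)
      calc s * t * s = s * g * s := by rw [hs]; exact bridge r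
        _ = s := hsgs
    · rintro ⟨⟨r, hs⟩, hsts⟩
      have h1 := habs1 s r hs
      have h2 := habs2 s r hs
      have hsgs : s * g * s = s := by
        calc s * g * s = s * t * s := by rw [hs]; exact (bridge r).symm
          _ = s := hsts
      exact ⟨⟨r, hs⟩, dsLE_of_proj (g * s) (s * g)
        (by rw [← mul_assoc]; exact h1) hsgs h2⟩
  ext w
  simp only [Set.mem_setOf_eq]
  constructor
  · -- maximal element ⇒ of the stated form
    rintro ⟨hwC, hmax⟩
    obtain ⟨⟨r, hwr⟩, hwtw⟩ := (charC w).mp hwC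
    obtain ⟨x, hx⟩ := hreg (t - t * w * t)
    set u := t - t * w * t with hu
    set X := x * u * x with hX
    have hXuX : X * u * X = X := by
      calc X * u * X = x * (u * x * u) * (x * u * x) := by rw [hX]; noncomm_ring
        _ = x * u * (x * u * x) := by rw [hx]
        _ = x * (u * x * u) * x := by noncomm_ring
        _ = x * u * x := by rw [hx]
        _ = X := hX.symm
    have huXu : u * X * u = u := by
      calc u * X * u = (u * x * u) * (x * u) := by rw [hX]; noncomm_ring
        _ = u * (x * u) := by rw [hx]
        _ = u * x * u := by rw [← mul_assoc]
        _ = u := hx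
    set x' := (1 - w * t) * X * (1 - t * w) with hx'
    have hx'tx' : x' * t * x' = x' := by
      have hmid : (1 - t * w) * t * (1 - w * t) = u := by
        calc (1 - t * w) * t * (1 - w * t)
            = t - t * w * t - t * w * t + t * ((w * t * w) * t) := by noncomm_ring
          _ = t - t * w * t - t * w * t + t * (w * t) := by rw [hwtw]
          _ = t - t * w * t := by noncomm_ring
          _ = u := hu.symm
      calc x' * t * x'
          = (1 - w * t) * X * ((1 - t * w) * t * (1 - w * t)) * X * (1 - t * w) := by
            rw [hx']; noncomm_ring
        _ = (1 - w * t) * X * u * X * (1 - t * w) := by rw [hmid]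
        _ = (1 - w * t) * (X * u * X) * (1 - t * w) := by noncomm_ring
        _ = (1 - w * t) * X * (1 - t * w) := by rw [hXuX]
        _ = x' := hx'.symm
    have hwtx' : w * t * x' = 0 := by
      calc w * t * x'
          = (w * t) * X * (1 - t * w) - ((w * t * w) * t) * X * (1 - t * w) := by
            rw [hx']; noncomm_ring
        _ = (w * t) * X * (1 - t * w) - (w * t) * X * (1 - t * w) := by rw [hwtw]
        _ = 0 := sub_self _
    have hx'tw : x' * t * w = 0 := by
      calc x' * t * w
          = (1 - w * t) * X * (t * w) - (1 - w * t) * X * (t * (w * t * w)) := by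
            rw [hx']; noncomm_ring
        _ = (1 - w * t) * X * (t * w) - (1 - w * t) * X * (t * w) := by rw [hwtw]
        _ = 0 := sub_self _
    have htx't : t * x' * t = u := by
      calc t * x' * t = (t - t * w * t) * X * (t - t * w * t) := by rw [hx']; noncomm_ring
        _ = u * X * u := by rw [← hu]
        _ = u := huXu
    set d₂ := e * x' * f with hd2
    have hd2td2 : d₂ * t * d₂ = d₂ := by
      calc d₂ * t * d₂ = e * x' * ((f * t) * e) * x' * f := by rw [hd2]; noncomm_ring
        _ = e * x' * (t * e) * x' * f := by rw [hft]
        _ = e * (x' * t * x') * f := by rw [hte]; noncomm_ring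
        _ = e * x' * f := by rw [hx'tx']
        _ = d₂ := hd2.symm
    have hwtd2 : w * t * d₂ = 0 := by
      calc w * t * d₂ = w * (t * e) * x' * f := by rw [hd2]; noncomm_ring
        _ = (w * t * x') * f := by rw [hte]
        _ = 0 := by rw [hwtx', zero_mul]
    have hd2tw : d₂ * t * w = 0 := by
      calc d₂ * t * w = e * x' * ((f * t) * w) := by rw [hd2]; noncomm_ring
        _ = e * (x' * t * w) := by rw [hft]; noncomm_ring
        _ = 0 := by rw [hx'tw, mul_zero]
    have htd2t : t * d₂ * t = u := by
      calc t * d₂ * t = (t * e) * x' * (f * t) := by rw [hd2]; noncomm_ring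
        _ = t * x' * t := by rw [hte, hft]
        _ = u := htx't
    set c' := w + d₂ with hc'
    have hc'rep : c' = e * (r + x') * f := by
      rw [hc', hd2, hwr]; noncomm_ring
    have hc'tc' : c' * t * c' = c' := by
      calc c' * t * c' = w * t * w + w * t * d₂ + d₂ * t * w + d₂ * t * d₂ := by
            rw [hc']; noncomm_ring
        _ = c' := by rw [hwtw, hwtd2, hd2tw, hd2td2, hc']; abel
    have hc'C : c' ∈ C := (charC c').mpr ⟨⟨r + x', hc'rep⟩, hc'tc'⟩
    have hle : dsLE w c' := by
      apply dsLE_of_proj (t * w) (w * t)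
      · calc c' * (t * w) = w * t * w + d₂ * t * w := by rw [hc']; noncomm_ring
          _ = w := by rw [hwtw, hd2tw, add_zero]
      · exact hwtw
      · calc (w * t) * c' = w * t * w + w * t * d₂ := by rw [hc']; noncomm_ring
          _ = w := by rw [hwtw, hwtd2, add_zero]
    have hc'w : c' = w := hmax c' hc'C hle
    have hd20 : d₂ = 0 := by
      have h0 : w + d₂ = w + 0 := by rw [add_zero, ← hc']; exact hc'w
      exact add_left_cancel h0
    have hu0 : u = 0 := by rw [← htd2t, hd20, mul_zero, zero_mul]
    have htwt : t * w * t = t := by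
      have h0 : t - t * w * t = 0 := by rw [← hu]; exact hu0
      exact (sub_eq_zero.mp h0).symm
    have hewf : e * w * f = w := by
      rw [hwr]
      calc e * (e * r * f) * f = (e * e) * r * (f * f) := by noncomm_ring
        _ = e * r * f := by rw [he, hf]
    exact ⟨w, htwt, hwtw, hewf.symm⟩
  · -- elements of the stated form are maximal
    rintro ⟨v, hv1, hv2, rfl⟩
    have hdtd : (e * v * f) * t * (e * v * f) = e * v * f := by
      calc (e * v * f) * t * (e * v * f) = e * v * ((f * t) * e) * v * f := by noncomm_ring
        _ = e * v * (t * e) * v * f := by rw [hft]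
        _ = e * (v * t * v) * f := by rw [hte]; noncomm_ring
        _ = e * v * f := by rw [hv2]
    have hdC : e * v * f ∈ C := (charC _).mpr ⟨⟨v, rfl⟩, hdtd⟩
    refine ⟨hdC, ?_⟩
    intro c' hc'C hle
    obtain ⟨⟨m0, hc'rep⟩, hc'tc'⟩ := (charC c').mp hc'C
    have hdmem : (e * v * f) ∈ rId c' := by
      rw [← hle.1, Set.mem_add]
      refine ⟨e * v * f, mem_rId.mpr ⟨t * (e * v * f), ?_⟩,
        (c' - e * v * f) * 0, mem_rId.mpr ⟨0, rfl⟩, by simp⟩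
      rw [← mul_assoc]; exact hdtd
    obtain ⟨m, hm⟩ := mem_rId.mp hdmem
    have hc'td : c' * t * (e * v * f) = e * v * f := by
      calc c' * t * (e * v * f) = (c' * t * c') * m := by rw [← hm]; noncomm_ring
        _ = c' * m := by rw [hc'tc']
        _ = e * v * f := hm
    have htdt : t * (e * v * f) * t = t := by
      calc t * (e * v * f) * t = (t * e) * v * (f * t) := by noncomm_ring
        _ = t * v * t := by rw [hte, hft]
        _ = t := hv1
    have hdtc' : (e * v * f) * t * c' = c' := by
      calc (e * v * f) * t * c' = (c' * t * (e * v * f)) * t * c' := by rw [hc'td]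
        _ = c' * (t * (e * v * f) * t) * c' := by noncomm_ring
        _ = c' * t * c' := by rw [htdt]
        _ = c' := hc'tc'
    obtain ⟨y, hy⟩ := hreg (c' - e * v * f)
    have hmem1 : c' - e * v * f ∈ rId (e * v * f) := mem_rId.mpr ⟨t * c' - t * (e * v * f), by
      calc (e * v * f) * (t * c' - t * (e * v * f))
          = (e * v * f) * t * c' - (e * v * f) * t * (e * v * f) := by noncomm_ring
        _ = c' - e * v * f := by rw [hdtc', hdtd]⟩
    have hmem2 : c' - e * v * f ∈ rId (c' - e * v * f) :=
      mem_rId.mpr ⟨y * (c' - e * v * f), by rw [← mul_assoc, hy]⟩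
    exact sub_eq_zero.mp (dsLE_zero_of_mem hle hmem1 hmem2)
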